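/- Let I be a finite nonempty set. Define 'Tw(I) as the category whose objects are triples (J₁, J₂, K) of surjections I ↠ J₁, I ↠ J₂ and a surjection J₁ ⊔ J₂ ↠ K such that the composite I ⊔ I → J₁ ⊔ J₂ → K factors through the fold map I ⊔ I → I. Then the functor 'j : Tw(I) → 'Tw(I), sending (I → J → K) to (J, J, K) with J₁ ⊔ J₂ = J ⊔ J → K the fold followed by J → K, admits a left adjoint sending (J₁, J₂, K) to (I → J → K), where J is the quotient of I by the join of the equivalence relations of I → J₁ and I → J₂, with the induced surjection J → K. Consequently 'j is cofinal. -/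

import Mathlib

open CategoryTheory Function Limits

/-- An object of the category `Tw(I)`: a diagram `I ↠ J ↠ K` of surjections of
finite nonempty sets. -/
structure TwObj (I : Type) : Type 1 where
  J : Type
  K : Type
  jFin : Finite J
  kFin : Finite K
  jNe : Nonempty J
  kNe : Nonempty K
  p : I → J
  q : J → K
  hp : Function.Surjective p
  hq : Function.Surjective q

/-- A morphism in `Tw(I)` from `(I → J₁ → K₁)` to `(I → J₂ → K₂)`: a surjection
`J₁ → J₂` under `I` together with a surjection `K₂ → K₁` such that the composite
`J₁ → J₂ → K₂ → K₁` equals `J₁ → K₁`. -/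
structure TwHom {I : Type} (A B : TwObj I) : Type where
  φ : A.J → B.J
  ψ : B.K → A.K
  hφ : Function.Surjective φ
  hψ : Function.Surjective ψ
  hp : ∀ i, φ (A.p i) = B.p i
  hq : ∀ j, ψ (B.q (φ j)) = A.q j

theorem TwHom.ext' {I : Type} {A B : TwObj I} :
    ∀ {f g : TwHom A B}, f.φ = g.φ → f.ψ = g.ψ → f = g
  | ⟨_, _, _, _, _, _⟩, ⟨_, _, _, _, _, _⟩, rfl, rfl => rfl

instance twCategory (I : Type) : Category (TwObj I) where
  Hom A B := TwHom A B
  id A := ⟨_root_.id, _root_.id, Function.surjective_id, Function.surjective_id,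
    fun _ => rfl, fun _ => rfl⟩
  comp := fun f g => ⟨g.φ ∘ f.φ, f.ψ ∘ g.ψ, g.hφ.comp f.hφ, f.hψ.comp g.hψ,
    fun i => by simp only [Function.comp_apply, f.hp, g.hp],
    fun j => by simp only [Function.comp_apply, g.hq, f.hq]⟩
  id_comp := fun f => TwHom.ext' rfl rfl
  comp_id := fun f => TwHom.ext' rfl rfl
  assoc := fun f g h => TwHom.ext' rfl rfl

/-- An object of `'Tw(I)`: surjections `I ↠ J₁`, `I ↠ J₂` and a surjection
`J₁ ⊔ J₂ ↠ K` (encoded by its two components) such that the composite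
`I ⊔ I → J₁ ⊔ J₂ → K` factors through the fold map `I ⊔ I → I`. -/
structure TwPObj (I : Type) : Type 1 where
  J₁ : Type
  J₂ : Type
  K : Type
  j₁Fin : Finite J₁
  j₂Fin : Finite J₂
  kFin : Finite K
  j₁Ne : Nonempty J₁
  j₂Ne : Nonempty J₂
  kNe : Nonempty K
  p₁ : I → J₁
  p₂ : I → J₂
  q₁ : J₁ → K
  q₂ : J₂ → K
  hp₁ : Function.Surjective p₁
  hp₂ : Function.Surjective p₂
  hq : ∀ k : K, (∃ j, q₁ j = k) ∨ (∃ j, q₂ j = k)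
  compat : ∀ i, q₁ (p₁ i) = q₂ (p₂ i)

structure TwPHom {I : Type} (A B : TwPObj I) : Type where
  a₁ : A.J₁ → B.J₁
  a₂ : A.J₂ → B.J₂
  ψ : B.K → A.K
  ha₁ : Function.Surjective a₁
  ha₂ : Function.Surjective a₂
  hψ : Function.Surjective ψ
  hp₁ : ∀ i, a₁ (A.p₁ i) = B.p₁ i
  hp₂ : ∀ i, a₂ (A.p₂ i) = B.p₂ i
  hq₁ : ∀ j, ψ (B.q₁ (a₁ j)) = A.q₁ j
  hq₂ : ∀ j, ψ (B.q₂ (a₂ j)) = A.q₂ j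

theorem TwPHom.ext' {I : Type} {A B : TwPObj I} :
    ∀ {f g : TwPHom A B}, f.a₁ = g.a₁ → f.a₂ = g.a₂ → f.ψ = g.ψ → f = g
  | ⟨_,_,_,_,_,_,_,_,_,_⟩, ⟨_,_,_,_,_,_,_,_,_,_⟩, rfl, rfl, rfl => rfl

instance twPCategory (I : Type) : Category (TwPObj I) where
  Hom A B := TwPHom A B
  id A := ⟨_root_.id, _root_.id, _root_.id, Function.surjective_id, Function.surjective_id,
    Function.surjective_id, fun _ => rfl, fun _ => rfl, fun _ => rfl, fun _ => rfl⟩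
  comp := fun f g => ⟨g.a₁ ∘ f.a₁, g.a₂ ∘ f.a₂, f.ψ ∘ g.ψ,
    g.ha₁.comp f.ha₁, g.ha₂.comp f.ha₂, f.hψ.comp g.hψ,
    fun i => by simp only [Function.comp_apply, f.hp₁, g.hp₁],
    fun i => by simp only [Function.comp_apply, f.hp₂, g.hp₂],
    fun j => by simp only [Function.comp_apply, g.hq₁, f.hq₁],
    fun j => by simp only [Function.comp_apply, g.hq₂, f.hq₂]⟩
  id_comp := fun f => TwPHom.ext' rfl rfl rfl
  comp_id := fun f => TwPHom.ext' rfl rfl rfl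
  assoc := fun f g h => TwPHom.ext' rfl rfl rfl

/-- The full embedding `'j : Tw(I) → 'Tw(I)`, sending `(I → J → K)` to `(J, J, K)`. -/
def jP (I : Type) : TwObj I ⥤ TwPObj I where
  obj A := ⟨A.J, A.J, A.K, A.jFin, A.jFin, A.kFin, A.jNe, A.jNe, A.kNe,
    A.p, A.p, A.q, A.q, A.hp, A.hp, fun k => Or.inl (A.hq k), fun _ => rfl⟩
  map f := ⟨f.φ, f.φ, f.ψ, f.hφ, f.hφ, f.hψ, f.hp, f.hp, f.hq, f.hq⟩
  map_id _ := rfl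
  map_comp _ _ := rfl

/-- The value of the left adjoint of `'j` on `(J₁, J₂, K)`: the diagram
`(I → J → K)` where `J` is the quotient of `I` by the join of the equivalence
relations of `I → J₁` and `I → J₂`, with the induced surjection `J → K`. -/
noncomputable def pushObj {I : Type} [Finite I] (B : TwPObj I) : TwObj I where
  J := Quotient (Setoid.ker B.p₁ ⊔ Setoid.ker B.p₂)
  K := B.K
  jFin := Finite.of_surjective (Quotient.mk _) fun c => Quotient.exists_rep c
  kFin := B.kFin
  jNe := by
    obtain ⟨j⟩ := B.j₁Ne
    obtain ⟨i, -⟩ := B.hp₁ j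
    exact ⟨Quotient.mk _ i⟩
  kNe := B.kNe
  p := Quotient.mk _
  q := Quotient.lift (fun i => B.q₁ (B.p₁ i)) (by
    intro a b h
    have h' : Relation.EqvGen
        (fun x y => Setoid.ker B.p₁ x y ∨ Setoid.ker B.p₂ x y) a b := by
      have heq := Setoid.sup_eq_eqvGen (Setoid.ker B.p₁) (Setoid.ker B.p₂)
      rw [show ((Setoid.ker B.p₁ ⊔ Setoid.ker B.p₂) : Setoid I) =
        Relation.EqvGen.setoid fun x y => Setoid.ker B.p₁ x y ∨ Setoid.ker B.p₂ x y
        from heq] at h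
      exact h
    clear h
    show B.q₁ (B.p₁ a) = B.q₁ (B.p₁ b)
    induction h' with
    | rel x y hxy =>
        rcases hxy with h₁ | h₂
        · exact congrArg B.q₁ h₁
        · rw [B.compat x, B.compat y]
          exact congrArg B.q₂ h₂
    | refl x => rfl
    | symm x y _ ih => exact ih.symm
    | trans x y z _ _ ih₁ ih₂ => exact ih₁.trans ih₂)
  hp := fun c => Quotient.exists_rep c
  hq := by
    intro k
    rcases B.hq k with ⟨j, rfl⟩ | ⟨j, rfl⟩
    · obtain ⟨i, rfl⟩ := B.hp₁ j
      exact ⟨Quotient.mk _ i, rfl⟩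
    · obtain ⟨i, rfl⟩ := B.hp₂ j
      exact ⟨Quotient.mk _ i, B.compat i⟩

theorem sup_ker_sound {I J₁ J₂ C : Type} {p₁ : I → J₁} {p₂ : I → J₂} {f : I → C}
    (h₁ : ∀ a b, p₁ a = p₁ b → f a = f b) (h₂ : ∀ a b, p₂ a = p₂ b → f a = f b) :
    ∀ a b, (Setoid.ker p₁ ⊔ Setoid.ker p₂) a b → f a = f b := by
  intro a b h
  have h' : Relation.EqvGen
      (fun x y => Setoid.ker p₁ x y ∨ Setoid.ker p₂ x y) a b := by
    have heq := Setoid.sup_eq_eqvGen (Setoid.ker p₁) (Setoid.ker p₂)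
    rw [show ((Setoid.ker p₁ ⊔ Setoid.ker p₂) : Setoid I) =
      Relation.EqvGen.setoid fun x y => Setoid.ker p₁ x y ∨ Setoid.ker p₂ x y
      from heq] at h
    exact h
  clear h
  induction h' with
  | rel x y hxy => rcases hxy with h | h; exacts [h₁ _ _ h, h₂ _ _ h]
  | refl x => rfl
  | symm _ _ _ ih => exact ih.symm
  | trans _ _ _ _ _ ih₁ ih₂ => exact ih₁.trans ih₂

theorem push_mk_eq₁ {I : Type} [Finite I] (B : TwPObj I) {a b : I}
    (h : B.p₁ a = B.p₁ b) : (pushObj B).p a = (pushObj B).p b :=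
  Quotient.sound (le_sup_left (α := Setoid I) (a := Setoid.ker B.p₁)
    (b := Setoid.ker B.p₂) h)

theorem push_mk_eq₂ {I : Type} [Finite I] (B : TwPObj I) {a b : I}
    (h : B.p₂ a = B.p₂ b) : (pushObj B).p a = (pushObj B).p b :=
  Quotient.sound (le_sup_right (α := Setoid I) (a := Setoid.ker B.p₁)
    (b := Setoid.ker B.p₂) h)

/-- The canonical map `J₁ → J` to the pushout. -/
noncomputable def bar₁ {I : Type} [Finite I] (B : TwPObj I) (j : B.J₁) :
    (pushObj B).J :=
  (pushObj B).p (Function.surjInv B.hp₁ j)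

noncomputable def bar₂ {I : Type} [Finite I] (B : TwPObj I) (j : B.J₂) :
    (pushObj B).J :=
  (pushObj B).p (Function.surjInv B.hp₂ j)

theorem bar₁_p {I : Type} [Finite I] (B : TwPObj I) (i : I) :
    bar₁ B (B.p₁ i) = (pushObj B).p i :=
  push_mk_eq₁ B (Function.surjInv_eq B.hp₁ (B.p₁ i))

theorem bar₂_p {I : Type} [Finite I] (B : TwPObj I) (i : I) :
    bar₂ B (B.p₂ i) = (pushObj B).p i :=
  push_mk_eq₂ B (Function.surjInv_eq B.hp₂ (B.p₂ i))

theorem q_bar₁ {I : Type} [Finite I] (B : TwPObj I) (j : B.J₁) :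
    (pushObj B).q (bar₁ B j) = B.q₁ j :=
  congrArg B.q₁ (Function.surjInv_eq B.hp₁ j)

theorem q_bar₂ {I : Type} [Finite I] (B : TwPObj I) (j : B.J₂) :
    (pushObj B).q (bar₂ B j) = B.q₂ j := by
  show B.q₁ (B.p₁ (Function.surjInv B.hp₂ j)) = B.q₂ j
  rw [B.compat, Function.surjInv_eq B.hp₂ j]

/-- The action of the left adjoint on morphisms. -/
noncomputable def pushMap {I : Type} [Finite I] {A B : TwPObj I} (f : TwPHom A B) :
    TwHom (pushObj A) (pushObj B) where
  φ := Quotient.lift (fun i => (pushObj B).p i) (by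
    apply sup_ker_sound
    · intro a b h
      apply push_mk_eq₁
      rw [← f.hp₁, ← f.hp₁]
      exact congrArg f.a₁ h
    · intro a b h
      apply push_mk_eq₂
      rw [← f.hp₂, ← f.hp₂]
      exact congrArg f.a₂ h)
  ψ := f.ψ
  hφ := by
    intro c
    obtain ⟨i, rfl⟩ := (pushObj B).hp c
    exact ⟨(pushObj A).p i, rfl⟩
  hψ := f.hψ
  hp := fun _ => rfl
  hq := by
    refine Quotient.ind fun i => ?_
    show f.ψ (B.q₁ (B.p₁ i)) = A.q₁ (A.p₁ i)
    rw [← f.hp₁, f.hq₁]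

/-- The left adjoint of `jP`. -/
noncomputable def Lfun (I : Type) [Finite I] : TwPObj I ⥤ TwObj I where
  obj := pushObj
  map f := pushMap f
  map_id _ := TwHom.ext' (funext (Quotient.ind fun _ => rfl)) rfl
  map_comp _ _ := TwHom.ext' (funext (Quotient.ind fun _ => rfl)) rfl

/-- The adjunction `Lfun ⊣ jP`. -/
noncomputable def pushAdj (I : Type) [Finite I] : Lfun I ⊣ jP I :=
  Adjunction.mkOfHomEquiv
    { homEquiv := fun B A =>
        { toFun := fun g =>
            { a₁ := g.φ ∘ bar₁ B
              a₂ := g.φ ∘ bar₂ B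
              ψ := g.ψ
              ha₁ := by
                intro a
                obtain ⟨x, rfl⟩ := g.hφ a
                obtain ⟨i, rfl⟩ := (pushObj B).hp x
                exact ⟨B.p₁ i, congrArg g.φ (bar₁_p B i)⟩
              ha₂ := by
                intro a
                obtain ⟨x, rfl⟩ := g.hφ a
                obtain ⟨i, rfl⟩ := (pushObj B).hp x
                exact ⟨B.p₂ i, congrArg g.φ (bar₂_p B i)⟩
              hψ := g.hψ
              hp₁ := fun i => by
                show g.φ (bar₁ B (B.p₁ i)) = A.p i
                rw [bar₁_p]; exact g.hp i
              hp₂ := fun i => by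
                show g.φ (bar₂ B (B.p₂ i)) = A.p i
                rw [bar₂_p]; exact g.hp i
              hq₁ := fun j => by
                show g.ψ (A.q (g.φ (bar₁ B j))) = B.q₁ j
                exact (g.hq _).trans (q_bar₁ B j)
              hq₂ := fun j => by
                show g.ψ (A.q (g.φ (bar₂ B j))) = B.q₂ j
                exact (g.hq _).trans (q_bar₂ B j) }
          invFun := fun f =>
            { φ := Quotient.lift (fun i => A.p i) (by
                apply sup_ker_sound
                · intro a b h
                  exact ((f.hp₁ a).symm.trans (congrArg f.a₁ h)).trans (f.hp₁ b)
                · intro a b h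
                  exact ((f.hp₂ a).symm.trans (congrArg f.a₂ h)).trans (f.hp₂ b))
              ψ := f.ψ
              hφ := by
                intro a
                obtain ⟨i, rfl⟩ := A.hp a
                exact ⟨(pushObj B).p i, rfl⟩
              hψ := f.hψ
              hp := fun _ => rfl
              hq := by
                refine Quotient.ind fun i => ?_
                exact (congrArg (fun x => f.ψ (A.q x)) (f.hp₁ i).symm).trans
                  (f.hq₁ (B.p₁ i)) }
          left_inv := fun g => TwHom.ext'
            (funext (Quotient.ind fun i => (g.hp i).symm)) rfl
          right_inv := fun f => TwPHom.ext'
            (funext fun j => by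
              exact (f.hp₁ _).symm.trans
                (congrArg f.a₁ (Function.surjInv_eq B.hp₁ j)))
            (funext fun j => by
              exact (f.hp₂ _).symm.trans
                (congrArg f.a₂ (Function.surjInv_eq B.hp₂ j)))
            rfl }
      homEquiv_naturality_left_symm := fun f g =>
        TwHom.ext' (funext (Quotient.ind fun _ => rfl)) rfl
      homEquiv_naturality_right := fun g h => TwPHom.ext' rfl rfl rfl }

/-- The full embedding `'j : Tw(I) → 'Tw(I)` admits a left adjoint sending
`(J₁, J₂, K)` to the quotient diagram `pushObj`, and consequently `'j` is cofinal. -/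
theorem stmt16 (I : Type) [Finite I] [Nonempty I] :
    ∃ L : TwPObj I ⥤ TwObj I,
      Nonempty (L ⊣ jP I) ∧ (∀ B : TwPObj I, L.obj B = pushObj B) ∧ (jP I).Final :=
  ⟨Lfun I, ⟨pushAdj I⟩, fun _ => rfl, Functor.final_of_adjunction (pushAdj I)⟩
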